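/- For i ≥ 1, the identity ∑_{s=0}^{i-1} (s+1)(2i-2s-2)(2i-2s-1)(2i-2s+1)·C(2i-1, s+1) = (4i³ - 5i² + i)·C(2i-1, i) + (8i² - 12i + 4)·2^{2i-2} holds. -/

import Mathlib

/-!
Writing `n = 2i - 1` and `c = 8i² - 12i + 4`, Gosper's algorithm finds a quartic `Q(i, s)`
with `Q(i, 0) = 0` such that the summand equals
`Q(i, s+1) C(n, s+1) - Q(i, s) C(n, s) + c C(n, s)`.
Summing over `s < i` telescopes to `Q(i, i) C(n, i) + c ∑_{s<i} C(n, s)`, where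
`Q(i, i) = 4i³ - 5i² + i`, and the remaining half-row sum of binomials is `2^{2i-2}`.
-/

open Finset

theorem Nat.cast_choose_succ_mul {R : Type*} [CommRing R] (n k : ℕ) :
    (n.choose (k + 1) : R) * (k + 1) = n.choose k * (n - k) := by
  rcases le_or_gt k n with hk | hk
  · exact_mod_cast congrArg (Nat.cast (R := R)) (Nat.choose_succ_right_eq n k)
  · simp [Nat.choose_eq_zero_of_lt hk, Nat.choose_eq_zero_of_lt (Nat.lt_succ_of_lt hk)]

namespace CaseIIdentity5

def potential (x s : ℚ) : ℚ :=
  s * (-4 * s ^ 3 + 16 * x * s ^ 2 + (-20 * x ^ 2 - 8 * x + 9) * s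
    + (8 * x ^ 3 + 12 * x ^ 2 - 14 * x + 1))

theorem summand_eq_telescope (x : ℚ) (n s : ℕ) (hn : (n : ℚ) = 2 * x - 1) :
    ((s : ℚ) + 1) * (2 * x - 2 * s - 2) * (2 * x - 2 * s - 1) * (2 * x - 2 * s + 1)
        * (n.choose (s + 1) : ℚ)
      = potential x (s + 1) * n.choose (s + 1) - potential x s * n.choose s
        + (8 * x ^ 2 - 12 * x + 4) * n.choose s := by
  have hrel := Nat.cast_choose_succ_mul (R := ℚ) n s
  rw [hn] at hrel
  unfold potential
  linear_combination (-4 * (s : ℚ) ^ 3 + (8 * x + 4) * s ^ 2 + (-4 * x ^ 2 - 8 * x + 5) * s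
    + (4 * x - 4)) * hrel

theorem sum_range_summand (x : ℚ) (n m : ℕ) (hn : (n : ℚ) = 2 * x - 1) :
    ∑ s ∈ range m,
        ((s : ℚ) + 1) * (2 * x - 2 * s - 2) * (2 * x - 2 * s - 1) * (2 * x - 2 * s + 1)
          * (n.choose (s + 1) : ℚ)
      = potential x m * n.choose m
        + (8 * x ^ 2 - 12 * x + 4) * ∑ s ∈ range m, (n.choose s : ℚ) := by
  have htel := sum_range_sub (fun s : ℕ => potential x s * n.choose s) m
  push_cast at htel
  rw [sum_congr rfl fun s _ => summand_eq_telescope x n s hn, sum_add_distrib, ← mul_sum, htel]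
  simp [potential]

end CaseIIdentity5

theorem caseI_identity5 (i : ℕ) (hi : 1 ≤ i) :
    ∑ s ∈ Finset.range i,
        (((s : ℚ) + 1) * (2 * (i : ℚ) - 2 * s - 2) * (2 * (i : ℚ) - 2 * s - 1)
          * (2 * (i : ℚ) - 2 * s + 1) * ((2 * i - 1).choose (s + 1) : ℚ))
      = (4 * (i : ℚ) ^ 3 - 5 * (i : ℚ) ^ 2 + i) * ((2 * i - 1).choose i : ℚ)
        + (8 * (i : ℚ) ^ 2 - 12 * i + 4) * 2 ^ (2 * i - 2) := by
  obtain ⟨j, rfl⟩ : ∃ j, i = j + 1 := ⟨i - 1, by omega⟩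
  have hn : 2 * (j + 1) - 1 = 2 * j + 1 := by omega
  have hpow : 2 * (j + 1) - 2 = 2 * j := by omega
  have hhalf : ∑ s ∈ range (j + 1), ((2 * j + 1).choose s : ℚ) = 2 ^ (2 * j) := by
    rw [pow_mul, show (2 : ℚ) ^ 2 = 4 by norm_num]
    exact_mod_cast Nat.sum_range_choose_halfway j
  rw [hn, hpow, CaseIIdentity5.sum_range_summand _ _ _ (by push_cast; ring), hhalf,
    CaseIIdentity5.potential]
  push_cast
  ring
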